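/- Work in the ℚ[[t]]-extension of the bracket [·,·]~, where elements are allowed to be infinite formal sums Σ_{m∈ℕ²} z^m·(A_m(t), n_m(t)) with matrix and vector parts having coefficients in t·ℚ[[t]] (all brackets below produce only finitely many terms in each fixed power of t and each fixed monomial z^m, so they are well defined). Let γ = (0,1), m = (1,0), n = (−1,0) (so ⟨γ,n⟩ = 0 and ⟨m,n⟩ = −1), fix i ≠ j, and set k := (0, Σ_{l≥1} (t^l/l)·n)·z^{lγ} (i.e. k = Σ_{l≥1} z^{lγ}·(0, (t^l/l)·n)) and s := (−t·E_{ij}, 0)·z^m. Then Σ_{l≥0} (1/l!)·ad_k^l(s) = s + (t²·E_{ij}, 0)·z^{m+γ}, where ad_k(x) := [k,x]~. (Via the Baker–Campbell–Hausdorff formula this is exactly the consistency of the Example-1 scattering diagram, i.e. the 2d–4d wall-crossing formula K_γ^ω ∘ S_{γ_{ij}}^μ = S_{γ_{ij}}^{μ'} ∘ S_{γ_{ij}+γ}^{μ'} ∘ K_γ^{ω'} with ω(γ,γ_{ij}) = −1, μ(γ_{ij}) = 1, μ'(γ+γ_{ij}) = −1.) -/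

import Mathlib

open PowerSeries

/-- Coefficients: pairs `(A(t), n(t))` with `A(t) ∈ gl(r,ℚ[[t]])` and
`n(t) ∈ ℚ[[t]]²`. -/
abbrev tvCoefQ (r : ℕ) := Matrix (Fin r) (Fin r) (PowerSeries ℚ) × (Fin 2 → PowerSeries ℚ)

/-- Formal sums `Σ_{m ∈ ℕ²} z^m · (A_m(t), n_m(t))`. -/
abbrev tvFormal (r : ℕ) := ℕ × ℕ → tvCoefQ r

/-- The pairing `⟨m,n⟩ = m₁n₁ + m₂n₂` between `ℕ²` and `ℚ[[t]]²`. -/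
noncomputable def pairQ (m : ℕ × ℕ) (n : Fin 2 → PowerSeries ℚ) : PowerSeries ℚ :=
  (m.1 : PowerSeries ℚ) * n 0 + (m.2 : PowerSeries ℚ) * n 1

/-- The extended tropical vertex bracket on pure coefficients:
`[(A,n)z^m,(A',n')z^{m'}] = ([A,A'] + ⟨m',n⟩A' − ⟨m,n'⟩A, ⟨m',n⟩n' − ⟨m,n'⟩n)`. -/
noncomputable def coefBrQ {r : ℕ} (v : tvCoefQ r) (m : ℕ × ℕ)
    (v' : tvCoefQ r) (m' : ℕ × ℕ) : tvCoefQ r :=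
  (v.1 * v'.1 - v'.1 * v.1 + pairQ m' v.2 • v'.1 - pairQ m v'.2 • v.1,
   pairQ m' v.2 • v'.2 - pairQ m v'.2 • v.2)

/-- The bracket `[·,·]~` extended to formal sums over monomials `z^m`, `m ∈ ℕ²`:
the `z^m`-coefficient of `[x,y]~` is the (finite) convolution sum
`Σ_{m'+m''=m} [x_{m'} z^{m'}, y_{m''} z^{m''}]~`. -/
noncomputable def brFormal {r : ℕ} (x y : tvFormal r) : tvFormal r := fun m =>
  ∑ p ∈ Finset.range (m.1 + 1) ×ˢ Finset.range (m.2 + 1),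
    coefBrQ (x p) p (y (m.1 - p.1, m.2 - p.2)) (m.1 - p.1, m.2 - p.2)

/-- `k = Σ_{l≥1} z^{lγ}·(0, (t^l/l)·n)` with `γ = (0,1)`, `n = (−1,0)`. -/
noncomputable def kElt (r : ℕ) : tvFormal r := fun m =>
  if m.1 = 0 ∧ 1 ≤ m.2 then
    (0, ![-((m.2 : ℚ)⁻¹ • (PowerSeries.X : PowerSeries ℚ) ^ m.2), 0])
  else 0

/-- `s = (−t·E_{ij}, 0)·z^m` with `m = (1,0)`. -/
noncomputable def sElt (r : ℕ) (i j : Fin r) : tvFormal r := fun m =>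
  if m = (1, 0) then
    (-((PowerSeries.X : PowerSeries ℚ) • Matrix.single i j 1), 0)
  else 0

/-!
An element `Σ_c z^{(1,c)} (a_c t^{c+1} A, 0)`, i.e. `t · a(t z^γ) · A z^{(1,0)}` for a series
`a = Σ_c a_c X^c`, is sent by `ad_k` to the element of the same shape with `a` replaced by
`log (1 - X) · a`: the vector part `-(t^l/l)·(1,0)` of `k` at `z^{lγ}` pairs with `(1,c)` to
`-t^l/l`, and the matrix commutator vanishes. Since `s` is of this shape with `a = -1`, the series
`exp(ad_k) s` corresponds to `-exp (log (1 - X)) = X - 1`, i.e. to `s + t² E_{ij} z^{m+γ}`.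
The identity `exp (log (1 + X)) = 1 + X` holds because `g = exp (log (1 + X))` satisfies
`g' = g / (1 + X)`, so `g / (1 + X)` has derivative zero and constant term `1`.
-/

namespace PowerSeries

theorem coeff_exp_subst_eq_sum {A : Type*} [CommRing A] [Algebra ℚ A] {f : A⟦X⟧}
    (hf : constantCoeff f = 0) {n N : ℕ} (hn : n < N) :
    coeff n ((exp A).subst f) = ∑ l ∈ Finset.range N, (l.factorial : ℚ)⁻¹ • coeff n (f ^ l) := by
  have hvanish : ∀ l, n < l → coeff n (f ^ l) = 0 := fun l hl => by
    obtain ⟨g, rfl⟩ := X_dvd_iff.mpr hf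
    rw [mul_pow, coeff_X_pow_mul', if_neg (by omega)]
  rw [coeff_subst' (HasSubst.of_constantCoeff_zero' hf),
    finsum_eq_sum_of_support_subset _ (s := Finset.range N) ?_]
  · refine Finset.sum_congr rfl fun l _ => ?_
    simp [coeff_exp, Algebra.smul_def]
  · intro l hl
    simp only [Function.mem_support, Finset.coe_range, Set.mem_Iio] at hl ⊢
    by_contra h
    exact hl (by rw [hvanish l (by omega), smul_zero])

variable {K : Type*} [Field K] [Algebra ℚ K]

theorem derivative_log : d⁄dX K (log K) = (1 + X)⁻¹ := by
  rw [deriv_log, eq_inv_iff_mul_eq_one (by simp)]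
  have := congrArg (rescale (-1 : K)) (mk_one_mul_one_sub_eq_one (S := K))
  rw [map_mul, map_sub, map_one, rescale_X] at this
  convert this using 2
  · ext n; simp [coeff_rescale]
  · simp

theorem exp_subst_log [CharZero K] : (exp K).subst (log K) = 1 + X := by
  set g := (exp K).subst (log K)
  set u : K⟦X⟧ := (1 + X)⁻¹
  have hu : u * (1 + X) = 1 := PowerSeries.inv_mul_cancel _ (by simp)
  have hdg : d⁄dX K g = g * u := by
    rw [derivative_subst HasSubst.log, derivative_exp, derivative_log]
  have hgu : g * u = 1 := by
    refine derivative.ext ?_ ?_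
    · rw [Derivation.leibniz, hdg, derivative_inv', map_add, derivative_X, derivative_one]
      simp only [smul_eq_mul]
      ring
    · rw [map_mul, constantCoeff_inv, ← coeff_zero_eq_constantCoeff_apply,
        coeff_exp_subst_eq_sum constantCoeff_log zero_lt_one]
      simp
  calc g = g * u * (1 + X) := by rw [mul_assoc, hu, mul_one]
    _ = 1 + X := by rw [hgu, one_mul]

-- Also right at `n = 0`, where `(0 : K)⁻¹ = 0`.
theorem coeff_rescale_neg_one_log (n : ℕ) : coeff n (rescale (-1) (log K)) = -(n : K)⁻¹ := by
  rcases Nat.eq_zero_or_pos n with rfl | hn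
  · simp
  · rw [coeff_rescale, coeff_log, if_neg hn.ne', map_div₀, map_pow, map_neg, map_one, map_natCast,
      pow_succ, ← mul_div_assoc, ← mul_assoc, ← mul_pow]
    simp [neg_div]

theorem exp_subst_rescale_neg_one_log [CharZero K] :
    (exp K).subst (rescale (-1) (log K)) = 1 - X := by
  have hX : HasSubst ((-1 : K) • X : K⟦X⟧) :=
    HasSubst.of_constantCoeff_zero' (by simp)
  rw [rescale_eq_subst, ← subst_comp_subst_apply HasSubst.log hX, exp_subst_log,
    ← rescale_eq_subst, map_add, map_one, rescale_X]
  simp [sub_eq_add_neg]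

end PowerSeries

noncomputable def seriesElt {r : ℕ} (A : Matrix (Fin r) (Fin r) ℚ⟦X⟧) : ℚ⟦X⟧ →ₗ[ℚ] tvFormal r where
  toFun a m := if m.1 = 1 then (monomial (m.2 + 1) (coeff m.2 a) • A, 0) else 0
  map_add' a b := by
    funext m
    simp only [Pi.add_apply]
    split_ifs <;> simp [add_smul]
  map_smul' q a := by
    funext m
    simp only [Pi.smul_apply, RingHom.id_apply]
    split_ifs <;> simp only [map_smul, smul_assoc, Prod.smul_mk, smul_zero]

theorem seriesElt_apply {r : ℕ} (A : Matrix (Fin r) (Fin r) ℚ⟦X⟧) (a : ℚ⟦X⟧) (m : ℕ × ℕ) :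
    seriesElt A a m = if m.1 = 1 then (monomial (m.2 + 1) (coeff m.2 a) • A, 0) else 0 := rfl

theorem coefBrQ_zero_left {r : ℕ} (v : tvCoefQ r) (p q : ℕ × ℕ) : coefBrQ 0 p v q = 0 := by
  simp [coefBrQ, pairQ]

theorem coefBrQ_zero_right {r : ℕ} (v : tvCoefQ r) (p q : ℕ × ℕ) : coefBrQ v p 0 q = 0 := by
  simp [coefBrQ, pairQ]

theorem coefBrQ_vec_mat {r : ℕ} (n : Fin 2 → ℚ⟦X⟧) (M : Matrix (Fin r) (Fin r) ℚ⟦X⟧)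
    (p q : ℕ × ℕ) : coefBrQ (0, n) p (M, 0) q = (pairQ q n • M, 0) := by
  simp [coefBrQ, pairQ]

theorem kElt_of_fst_ne_zero {r : ℕ} {p : ℕ × ℕ} (hp : p.1 ≠ 0) : kElt r p = 0 := by
  simp [kElt, hp]

theorem kElt_zero_fst (r b : ℕ) :
    kElt r (0, b) = (0, ![monomial b (coeff b (rescale (-1) (log ℚ))), 0]) := by
  rw [coeff_rescale_neg_one_log]
  rcases Nat.eq_zero_or_pos b with rfl | hb
  · simp [kElt, Prod.ext_iff, funext_iff, Fin.forall_fin_two]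
  · simp [kElt, Nat.one_le_iff_ne_zero, hb.ne', monomial_eq_C_mul_X_pow, Algebra.smul_def]

theorem brFormal_kElt_seriesElt {r : ℕ} (A : Matrix (Fin r) (Fin r) ℚ⟦X⟧) (a : ℚ⟦X⟧) :
    brFormal (kElt r) (seriesElt A a) = seriesElt A (rescale (-1) (log ℚ) * a) := by
  funext ⟨m₁, c⟩
  rw [brFormal, Finset.sum_product, Finset.sum_eq_single 0
    (fun p₁ _ hp₁ => Finset.sum_eq_zero fun b _ => by
      rw [kElt_of_fst_ne_zero hp₁, coefBrQ_zero_left])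
    (by simp)]
  simp only [Nat.sub_zero, kElt_zero_fst, seriesElt_apply]
  split_ifs with h₁
  · subst h₁
    simp only [coefBrQ_vec_mat, pairQ, Matrix.cons_val_zero, Matrix.cons_val_one, Nat.cast_one,
      one_mul, mul_zero, add_zero]
    rw [coeff_mul, Finset.Nat.sum_antidiagonal_eq_sum_range_succ_mk, map_sum, Finset.sum_smul]
    refine Prod.ext ?_ (by simp [Prod.snd_sum])
    rw [Prod.fst_sum]
    refine Finset.sum_congr rfl fun b hb => ?_
    rw [smul_smul, monomial_mul_monomial,
      show b + (c - b + 1) = c + 1 by simp at hb; omega]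
  · simp [coefBrQ_zero_right]

theorem iterate_brFormal_kElt_seriesElt {r : ℕ} (A : Matrix (Fin r) (Fin r) ℚ⟦X⟧) (a : ℚ⟦X⟧)
    (l : ℕ) : (brFormal (kElt r))^[l] (seriesElt A a) =
      seriesElt A (rescale (-1) (log ℚ) ^ l * a) := by
  induction l with
  | zero => simp
  | succ l ih => rw [Function.iterate_succ_apply', ih, brFormal_kElt_seriesElt, pow_succ',
      mul_assoc]

theorem seriesElt_apply_of_coeff_eq {r : ℕ} (A : Matrix (Fin r) (Fin r) ℚ⟦X⟧) {a b : ℚ⟦X⟧}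
    {m : ℕ × ℕ} (h : coeff m.2 a = coeff m.2 b) : seriesElt A a m = seriesElt A b m := by
  simp only [seriesElt_apply, h]

theorem sElt_eq_seriesElt (r : ℕ) (i j : Fin r) :
    sElt r i j = seriesElt (Matrix.single i j 1) (-1) := by
  funext ⟨m₁, c⟩
  rw [sElt, seriesElt_apply]
  by_cases h₁ : m₁ = 1 <;> rcases c with _ | c <;>
    simp [h₁, coeff_one, ← X_eq, neg_smul, Prod.mk_zero_zero]

theorem sElt_add_eq_seriesElt (r : ℕ) (i j : Fin r) :
    (sElt r i j + fun m' : ℕ × ℕ =>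
      if m' = (1, 1) then (((X : ℚ⟦X⟧) ^ 2) • Matrix.single i j 1, 0) else 0 : tvFormal r) =
      seriesElt (Matrix.single i j 1) (X - 1) := by
  rw [sub_eq_neg_add, map_add, ← sElt_eq_seriesElt]
  congr 1
  funext ⟨m₁, c⟩
  rw [seriesElt_apply]
  by_cases h₁ : m₁ = 1 <;> rcases c with _ | _ | c <;>
    simp [h₁, coeff_X, ← X_pow_eq, Prod.mk_zero_zero]

theorem exp_ad_k_s_general (r : ℕ) (i j : Fin r) :
    ∀ m : ℕ × ℕ, ∃ N : ℕ, ∀ L : ℕ, N ≤ L →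
      (∑ l ∈ Finset.range L,
          ((Nat.factorial l : ℚ))⁻¹ • ((brFormal (kElt r))^[l] (sElt r i j))) m =
        ((sElt r i j +
          fun m' : ℕ × ℕ =>
            if m' = (1, 1) then
              (((PowerSeries.X : PowerSeries ℚ) ^ 2) • Matrix.single i j 1, 0)
            else 0 : tvFormal r)) m := by
  intro m
  refine ⟨m.2 + 1, fun L hL => ?_⟩
  rw [sElt_add_eq_seriesElt, sElt_eq_seriesElt]
  simp only [iterate_brFormal_kElt_seriesElt, ← map_smul, ← map_sum]
  apply seriesElt_apply_of_coeff_eq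
  rw [← neg_sub, ← exp_subst_rescale_neg_one_log, map_neg,
    coeff_exp_subst_eq_sum (by simp [← coeff_zero_eq_constantCoeff_apply]) (by omega : m.2 < L)]
  simp [Finset.sum_neg_distrib]

/-- Consistency of the Example-1 scattering diagram (the 2d–4d wall-crossing
formula `K_γ^ω ∘ S_{γ_{ij}}^μ = S_{γ_{ij}}^{μ'} ∘ S_{γ_{ij}+γ}^{μ'} ∘ K_γ^{ω'}`):
`Σ_{l≥0} (1/l!)·ad_k^l(s) = s + (t²·E_{ij}, 0)·z^{m+γ}`, where the infinite sum
is interpreted via eventually-stabilizing partial sums in each monomial. -/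
theorem exp_ad_k_s (r : ℕ) (hr : 1 ≤ r) (i j : Fin r) (hij : i ≠ j) :
    ∀ m : ℕ × ℕ, ∃ N : ℕ, ∀ L : ℕ, N ≤ L →
      (∑ l ∈ Finset.range L,
          ((Nat.factorial l : ℚ))⁻¹ • ((brFormal (kElt r))^[l] (sElt r i j))) m =
        ((sElt r i j +
          fun m' : ℕ × ℕ =>
            if m' = (1, 1) then
              (((PowerSeries.X : PowerSeries ℚ) ^ 2) • Matrix.single i j 1, 0)
            else 0 : tvFormal r)) m :=
  exp_ad_k_s_general r i j
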